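/- arXiv:1505.06835 — 6 statements merged into one kernel-verified Lean document; each statement's English description precedes it below -/
import Mathlib

section
/- Let S be a submonoid of ℕ whose least nonzero element is a, let g be a natural number, and define Υ(t) = max over m ∈ {0, ..., 2g} of (−2·#(S ∩ [0,m)) − t·(g − m)) for real t. Then for all t with 0 ≤ t ≤ 2/a, Υ(t) = −g·t. -/
/-- count of elements of S below m -/
noncomputable def cnt (S : Set ℕ) (m : ℕ) : ℕ := {n : ℕ | n ∈ S ∧ n < m}.ncard

/-- the Borodzik–Livingston formula for the Upsilon function -/
noncomputable def ups (S : Set ℕ) (g : ℕ) (t : ℝ) : ℝ :=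
  (Finset.range (2 * g + 1)).sup' (Finset.nonempty_range_iff.mpr (Nat.succ_ne_zero _))
    fun m => -2 * (cnt S m : ℝ) - t * ((g : ℝ) - (m : ℝ))

lemma cnt_key (S : AddSubmonoid ℕ) (a : ℕ) (ha : a ∈ S) (ha0 : a ≠ 0) (m : ℕ) :
    m ≤ a * cnt (S : Set ℕ) m := by
  classical
  set N := (m + a - 1) / a with hN
  have hdm : a * N + (m + a - 1) % a = m + a - 1 := Nat.div_add_mod _ _
  have hr : (m + a - 1) % a < a := Nat.mod_lt _ (Nat.pos_of_ne_zero ha0)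
  have hNcnt : N ≤ cnt (S : Set ℕ) m := by
    have hsub : ↑((Finset.range N).image (· * a)) ⊆ {n : ℕ | n ∈ (S : Set ℕ) ∧ n < m} := by
      intro x hx
      simp only [Finset.coe_image, Finset.coe_range, Set.mem_image, Set.mem_Iio] at hx
      obtain ⟨k, hk, rfl⟩ := hx
      refine ⟨?_, ?_⟩
      · have : k • a ∈ S := AddSubmonoid.nsmul_mem S ha k
        simpa [smul_eq_mul, mul_comm] using this
      · have h1 : (k + 1) * a ≤ N * a := Nat.mul_le_mul_right a hk
        have h2 : (k + 1) * a = k * a + a := by ring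
        have h3 : N * a = a * N := by ring
        omega
    have hfin : {n : ℕ | n ∈ (S : Set ℕ) ∧ n < m}.Finite :=
      (Set.finite_Iio m).subset (fun x hx => hx.2)
    have := Set.ncard_le_ncard hsub hfin
    rwa [Set.ncard_coe_finset,
      Finset.card_image_of_injective _ (mul_left_injective₀ ha0),
      Finset.card_range] at this
  have hmN : m ≤ a * N := by omega
  calc m ≤ a * N := hmN
    _ ≤ a * cnt (S : Set ℕ) m := Nat.mul_le_mul_left a hNcnt

/-- If `a` is the least nonzero element of `S`, then `Υ(t) = -g·t`
for `0 ≤ t ≤ 2/a`. -/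
theorem stmt_1 (S : AddSubmonoid ℕ) (a : ℕ)
    (hleast : IsLeast {n : ℕ | n ∈ S ∧ n ≠ 0} a) (g : ℕ) (t : ℝ)
    (ht0 : 0 ≤ t) (ht1 : t ≤ 2 / (a : ℝ)) :
    ups (S : Set ℕ) g t = -(g : ℝ) * t := by
  obtain ⟨⟨haS, ha0⟩, _⟩ := hleast
  have hapos : (0 : ℝ) < (a : ℝ) := by
    exact_mod_cast Nat.pos_of_ne_zero ha0
  apply le_antisymm
  · apply Finset.sup'_le
    intro m hm
    have hkey : (m : ℝ) ≤ (a : ℝ) * (cnt (S : Set ℕ) m : ℝ) := by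
      exact_mod_cast cnt_key S a haS ha0 m
    have h1 : t * m ≤ (2 / (a : ℝ)) * m :=
      mul_le_mul_of_nonneg_right ht1 (Nat.cast_nonneg m)
    have h2 : (2 / (a : ℝ)) * m ≤ 2 * (cnt (S : Set ℕ) m : ℝ) := by
      rw [div_mul_eq_mul_div, div_le_iff₀ hapos]
      nlinarith [hkey]
    nlinarith [h1, h2]
  · have h0 : 0 ∈ Finset.range (2 * g + 1) := Finset.mem_range.mpr (Nat.succ_pos _)
    have hle := Finset.le_sup' (f := fun m => -2 * (cnt (S : Set ℕ) m : ℝ) - t * ((g : ℝ) - (m : ℝ))) h0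
    have hcnt0 : cnt (S : Set ℕ) 0 = 0 := by
      simp [cnt]
    rw [ups]
    calc -(g : ℝ) * t = -2 * (cnt (S : Set ℕ) 0 : ℝ) - t * ((g : ℝ) - ((0 : ℕ) : ℝ)) := by
          rw [hcnt0]; push_cast; ring
      _ ≤ _ := hle
end

section
/- Let S be a submonoid of ℕ whose least nonzero element is a, let g be a natural number with a ≤ 2g, and define Υ(t) = max over m ∈ {0, ..., 2g} of (−2·#(S ∩ [0,m)) − t·(g − m)). Then for all real t with 2/a < t ≤ 1, Υ(t) > −g·t. -/
/-- If `a` is the least nonzero element of `S` and `a ≤ 2g`, then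
`Υ(t) > -g·t` for `2/a < t ≤ 1`. -/
theorem stmt_2 (S : AddSubmonoid ℕ) (a : ℕ)
    (hleast : IsLeast {n : ℕ | n ∈ S ∧ n ≠ 0} a) (g : ℕ) (hag : a ≤ 2 * g) (t : ℝ)
    (ht0 : 2 / (a : ℝ) < t) (ht1 : t ≤ 1) :
    ups (S : Set ℕ) g t > -(g : ℝ) * t := by
  obtain ⟨⟨haS, ha0⟩, hmin⟩ := hleast
  have hapos : 0 < a := Nat.pos_of_ne_zero ha0
  have hcnt : cnt (S : Set ℕ) a = 1 := by
    have : {n : ℕ | n ∈ (S : Set ℕ) ∧ n < a} = {0} := by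
      ext n
      simp only [Set.mem_setOf_eq, Set.mem_singleton_iff]
      constructor
      · rintro ⟨hnS, hna⟩
        by_contra hn
        exact absurd hna (not_lt.2 (hmin ⟨hnS, hn⟩))
      · rintro rfl; exact ⟨S.zero_mem, hapos⟩
    rw [cnt, this, Set.ncard_singleton]
  have hma : a ∈ Finset.range (2 * g + 1) := Finset.mem_range.2 (Nat.lt_succ_of_le hag)
  have hle := Finset.le_sup' (fun m => -2 * (cnt (S : Set ℕ) m : ℝ) - t * ((g : ℝ) - (m : ℝ))) hma
  rw [ups] at *
  have hta : 2 < t * a := by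
    have hapos' : (0:ℝ) < a := by exact_mod_cast hapos
    rw [div_lt_iff₀ hapos'] at ht0; linarith
  refine lt_of_lt_of_le ?_ hle
  rw [hcnt]
  push_cast
  nlinarith
end

section
/- Let S₀ and S₁ be submonoids of ℕ with least nonzero elements a and c respectively, and let g₀, g₁ be naturals with a ≤ 2g₀, c ≤ 2g₁, g₀ ≤ g₁, and a > c. Define Υᵢ(t) = max over m ∈ {0,...,2gᵢ} of (−2·#(Sᵢ ∩ [0,m)) − t·(gᵢ − m)). Then Υ₁(2/c) − Υ₀(2/c) < −(2/c)·(g₁ − g₀). -/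
lemma cnt_lower (S : AddSubmonoid ℕ) {c : ℕ}
    (hcS : c ∈ S) (hc0 : c ≠ 0) (m : ℕ) : m ≤ c * cnt (S : Set ℕ) m := by
  classical
  rcases Nat.eq_zero_or_pos m with rfl | hm
  · exact Nat.zero_le _
  have hcnt : cnt (S : Set ℕ) m = ((Finset.range m).filter (fun n => n ∈ S)).card := by
    rw [cnt, ← Set.ncard_coe_finset]
    congr 1
    ext n
    simp [and_comm]
  set N := (m - 1) / c + 1 with hN
  have hsub : (Finset.range N).image (fun k => k * c) ⊆
      (Finset.range m).filter (fun n => n ∈ S) := by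
    intro x hx
    simp only [Finset.mem_image, Finset.mem_range] at hx
    obtain ⟨k, hk, rfl⟩ := hx
    refine Finset.mem_filter.mpr ⟨Finset.mem_range.mpr ?_, ?_⟩
    · calc k * c ≤ ((m - 1) / c) * c :=
            Nat.mul_le_mul_right c (Nat.lt_succ_iff.mp hk)
        _ ≤ m - 1 := Nat.div_mul_le_self _ _
        _ < m := Nat.sub_lt hm one_pos
    · simpa [smul_eq_mul] using S.nsmul_mem hcS k
  have hinj : Function.Injective (fun k : ℕ => k * c) := fun a b h => by
    exact Nat.eq_of_mul_eq_mul_right (Nat.pos_of_ne_zero hc0) h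
  have hcard : N ≤ ((Finset.range m).filter (fun n => n ∈ S)).card := by
    calc N = ((Finset.range N).image (fun k => k * c)).card := by
          rw [Finset.card_image_of_injective _ hinj, Finset.card_range]
      _ ≤ _ := Finset.card_le_card hsub
  have h1 := Nat.div_add_mod (m - 1) c
  have h2 := Nat.mod_lt (m - 1) (Nat.pos_of_ne_zero hc0)
  have hmN : m ≤ c * N := by
    have hexp : c * N = c * ((m - 1) / c) + c := by
      rw [hN, Nat.mul_add, Nat.mul_one]
    omega
  calc m ≤ c * N := hmN
    _ ≤ c * cnt (S : Set ℕ) m := by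
        rw [hcnt]; exact Nat.mul_le_mul_left c hcard

lemma cnt_at_min (S : AddSubmonoid ℕ) {a : ℕ}
    (ha : IsLeast {n : ℕ | n ∈ S ∧ n ≠ 0} a) : cnt (S : Set ℕ) a = 1 := by
  have h0 : 0 < a := Nat.pos_of_ne_zero ha.1.2
  have : {n : ℕ | n ∈ (S : Set ℕ) ∧ n < a} = {0} := by
    ext n
    simp only [Set.mem_setOf_eq, Set.mem_singleton_iff]
    constructor
    · rintro ⟨hn, hlt⟩
      by_contra hne
      exact absurd (ha.2 ⟨hn, hne⟩) (Nat.not_le.mpr hlt)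
    · rintro rfl
      exact ⟨S.zero_mem, h0⟩
  rw [cnt, this, Set.ncard_singleton]

/-- the key inequality obstructing minimal cobordisms. -/
theorem stmt_4 (S₀ S₁ : AddSubmonoid ℕ) (a c : ℕ)
    (ha : IsLeast {n : ℕ | n ∈ S₀ ∧ n ≠ 0} a)
    (hc : IsLeast {n : ℕ | n ∈ S₁ ∧ n ≠ 0} c)
    (g₀ g₁ : ℕ) (hag : a ≤ 2 * g₀) (hcg : c ≤ 2 * g₁)
    (hg : g₀ ≤ g₁) (hac : c < a) :
    ups (S₁ : Set ℕ) g₁ (2 / (c : ℝ)) - ups (S₀ : Set ℕ) g₀ (2 / (c : ℝ))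
      < -(2 / (c : ℝ)) * ((g₁ : ℝ) - (g₀ : ℝ)) := by
  set t : ℝ := 2 / (c : ℝ) with ht
  have hc0 : c ≠ 0 := hc.1.2
  have hcR : (0 : ℝ) < (c : ℝ) := by exact_mod_cast Nat.pos_of_ne_zero hc0
  have htc : t * (c : ℝ) = 2 := by
    rw [ht]; field_simp
  have ht0 : 0 ≤ t := by positivity
  -- upper bound for ups S₁
  have h1 : ups (S₁ : Set ℕ) g₁ t ≤ -t * (g₁ : ℝ) := by
    apply Finset.sup'_le
    intro m hm
    have hlow : (m : ℝ) ≤ (c : ℝ) * (cnt (S₁ : Set ℕ) m : ℝ) := by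
      exact_mod_cast cnt_lower S₁ hc.1.1 hc0 m
    have key : t * (m : ℝ) ≤ 2 * (cnt (S₁ : Set ℕ) m : ℝ) := by
      calc t * (m : ℝ) ≤ t * ((c : ℝ) * (cnt (S₁ : Set ℕ) m : ℝ)) :=
            mul_le_mul_of_nonneg_left hlow ht0
        _ = (t * (c : ℝ)) * (cnt (S₁ : Set ℕ) m : ℝ) := by ring
        _ = 2 * (cnt (S₁ : Set ℕ) m : ℝ) := by rw [htc]
    nlinarith [key]
  -- lower bound for ups S₀ at m = a
  have hmem : a ∈ Finset.range (2 * g₀ + 1) := Finset.mem_range.mpr (by omega)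
  have h2 : -2 * (cnt (S₀ : Set ℕ) a : ℝ) - t * ((g₀ : ℝ) - (a : ℝ))
      ≤ ups (S₀ : Set ℕ) g₀ t := by
    rw [ups]
    exact Finset.le_sup' (fun m => -2 * (cnt (S₀ : Set ℕ) m : ℝ) - t * ((g₀ : ℝ) - (m : ℝ))) hmem
  rw [cnt_at_min S₀ ha] at h2
  norm_num at h2
  -- t * a > 2
  have h3 : 2 < t * (a : ℝ) := by
    have haR : (c : ℝ) < (a : ℝ) := by exact_mod_cast hac
    rw [ht, div_mul_eq_mul_div, lt_div_iff₀ hcR]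
    linarith
  have hexp : -t * ((g₁ : ℝ) - (g₀ : ℝ)) = -t * (g₁ : ℝ) + t * (g₀ : ℝ) := by ring
  have h2' : -2 - t * (g₀ : ℝ) + t * (a : ℝ) ≤ ups (S₀ : Set ℕ) g₀ t := by
    linarith [h2]
  nlinarith [h1, h2', h3]
end

section
/- For coprime integers 1 < a < b, the submonoid of ℕ generated by a and b has least nonzero element a, and the number of natural numbers not in this submonoid equals (a−1)(b−1)/2. -/
/-!
Since `a` and `b` are coprime, every integer can be written uniquely as `x * a + y * b` with
`0 ≤ y < a`, and it lies in `⟨a, b⟩` exactly when `x ≥ 0`. The reflection `n ↦ F - n` about the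
Frobenius number `F = a * b - a - b` replaces `(x, y)` by `(-1 - x, a - 1 - y)`, so it exchanges
elements and gaps in `[0, F]`. No gap exceeds `F`, hence the gaps are exactly half of the
`F + 1 = (a - 1) * (b - 1)` numbers in `[0, F]`.
-/

open Finset

theorem Finset.two_mul_card_filter_range_of_reflect_iff_not {p : ℕ → Prop} [DecidablePred p]
    {N : ℕ} (h : ∀ n < N, p (N - 1 - n) ↔ ¬p n) : 2 * #{n ∈ range N | p n} = N := by
  have hpair : ∀ n ∈ range N,
      ((if p (N - 1 - n) then 1 else 0) + if p n then 1 else 0) = 1 := by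
    intro n hn
    by_cases hp : p n <;> simp [hp, h n (mem_range.mp hn)]
  calc 2 * #{n ∈ range N | p n}
      = ∑ n ∈ range N, ((if p (N - 1 - n) then 1 else 0) + if p n then 1 else 0) := by
        rw [sum_add_distrib, sum_range_reflect (fun n ↦ if p n then 1 else 0), card_filter]
        ring
    _ = N := by rw [sum_congr rfl hpair, sum_const, card_range, smul_eq_mul, mul_one]

namespace Nat

theorem mem_closure_pair_iff {a b n : ℕ} :
    n ∈ AddSubmonoid.closure ({a, b} : Set ℕ) ↔ ∃ x y : ℕ, x * a + y * b = n := by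
  simp only [AddSubmonoid.mem_closure_pair, smul_eq_mul]

theorem isLeast_closure_pair {a b : ℕ} (ha : a ≠ 0) (hab : a ≤ b) :
    IsLeast {n : ℕ | n ∈ AddSubmonoid.closure ({a, b} : Set ℕ) ∧ n ≠ 0} a := by
  refine ⟨⟨AddSubmonoid.subset_closure (by simp), ha⟩, ?_⟩
  rintro n ⟨hn, hn0⟩
  obtain ⟨x, y, rfl⟩ := mem_closure_pair_iff.mp hn
  rcases x with _ | x <;> rcases y with _ | y <;> simp_all <;> nlinarith

theorem exists_eq_mul_add_mul_of_coprime {a b : ℕ} (hab : Coprime a b) (ha : 0 < a) (n : ℤ) :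
    ∃ x y : ℤ, 0 ≤ y ∧ y < a ∧ n = x * a + y * b := by
  obtain ⟨u, v, huv⟩ := isCoprime_iff_coprime.mpr hab
  refine ⟨n * u + n * v / a * b, n * v % a, Int.emod_nonneg _ (by omega),
    Int.emod_lt_of_pos _ (by omega), ?_⟩
  linear_combination (-n) * huv - b * Int.mul_ediv_add_emod (n * v) a

theorem mem_closure_pair_iff_nonneg {a b n : ℕ} (hab : Coprime a b) {x y : ℤ} (hy : 0 ≤ y)
    (hya : y < a) (hn : (n : ℤ) = x * a + y * b) :
    n ∈ AddSubmonoid.closure ({a, b} : Set ℕ) ↔ 0 ≤ x := by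
  rw [mem_closure_pair_iff]
  constructor
  · rintro ⟨x', y', hxy⟩
    have hxy' : (x' * a + y' * b : ℤ) = n := by exact_mod_cast hxy
    obtain ⟨k, hk⟩ : (a : ℤ) ∣ y' - y :=
      (isCoprime_iff_coprime.mpr hab).dvd_of_dvd_mul_right
        ⟨x - x', by linear_combination hxy' + hn⟩
    -- `y' - y = a * k` exceeds `-a`, so `k ≥ 0`
    have hk_nonneg : 0 ≤ k := by nlinarith
    have hx : x = x' + k * b :=
      mul_left_cancel₀ (by omega : (a : ℤ) ≠ 0) (by linear_combination -hn - hxy' + b * hk)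
    rw [hx]
    positivity
  · intro hx
    lift x to ℕ using hx
    lift y to ℕ using hy
    exact ⟨x, y, by exact_mod_cast hn.symm⟩

theorem mem_closure_pair_sub_iff_notMem {a b n : ℕ} (hab : Coprime a b) (ha : 1 < a)
    (hb : 1 < b) (hn : n ≤ a * b - a - b) :
    a * b - a - b - n ∈ AddSubmonoid.closure ({a, b} : Set ℕ) ↔
      n ∉ AddSubmonoid.closure ({a, b} : Set ℕ) := by
  obtain ⟨x, y, hy, hya, hxy⟩ := exists_eq_mul_add_mul_of_coprime hab (by omega) n
  have hF : ((a * b - a - b : ℕ) : ℤ) = a * b - a - b := by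
    rw [Nat.sub_sub, Nat.cast_sub (add_le_mul ha hb)]
    push_cast
    ring
  rw [mem_closure_pair_iff_nonneg hab hy hya hxy,
    mem_closure_pair_iff_nonneg (x := -x - 1) (y := a - 1 - y) hab (by omega) (by omega)
      (by rw [Nat.cast_sub hn, hF]; linear_combination -hxy)]
  omega

end Nat

/-- For coprime `1 < a < b`, the submonoid of `ℕ` generated by `a` and `b`
has least nonzero element `a`, and its complement has exactly `(a-1)(b-1)/2` elements. -/
theorem stmt_5 (a b : ℕ) (hab : Nat.Coprime a b) (h1 : 1 < a) (h2 : a < b) :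
    IsLeast {n : ℕ | n ∈ AddSubmonoid.closure ({a, b} : Set ℕ) ∧ n ≠ 0} a ∧
    {n : ℕ | n ∉ AddSubmonoid.closure ({a, b} : Set ℕ)}.ncard = (a - 1) * (b - 1) / 2 := by
  classical
  have hb : 1 < b := h1.trans h2
  refine ⟨Nat.isLeast_closure_pair (by omega) h2.le, ?_⟩
  have hF : a * b - a - b + 1 = (a - 1) * (b - 1) := by
    zify [Nat.add_le_mul h1 hb, h1.le, hb.le, Nat.sub_sub]
    ring
  set S := AddSubmonoid.closure ({a, b} : Set ℕ)
  have hgaps : {n : ℕ | n ∉ S} = ↑{n ∈ range (a * b - a - b + 1) | n ∉ S} := by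
    ext n
    simp only [coe_filter, mem_range, Set.mem_ofPred_eq]
    exact ⟨fun h ↦ ⟨Nat.lt_succ_of_le ((frobeniusNumber_pair hab h1 hb).2 h), h⟩, fun h ↦ h.2⟩
  have hcount := two_mul_card_filter_range_of_reflect_iff_not (N := a * b - a - b + 1)
    (p := (· ∉ S)) fun n hn ↦ by
      rw [Nat.add_sub_cancel]
      exact (Nat.mem_closure_pair_sub_iff_notMem hab h1 hb (by omega)).not
  rw [hgaps, Set.ncard_coe_finset]
  omega
end

section
/- Let a, b be coprime integers with 1 < a < b, let S = {xa + yb : x, y ∈ ℕ}, and let g = (a−1)(b−1)/2. Define Υ(t) = max over m ∈ {0,...,2g} of (−2·#(S ∩ [0,m)) − t·(g − m)). Then Υ(t) = −g·t for 0 ≤ t ≤ 2/a, and Υ(t) > −g·t for 2/a < t ≤ 1. -/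
open Classical in
lemma cnt_card (S : Set ℕ) (m : ℕ) :
    cnt S m = ((Finset.range m).filter (· ∈ S)).card := by
  rw [cnt, ← Set.ncard_coe_finset]
  congr 1
  ext n
  simp [and_comm]

lemma cnt_zero (S : Set ℕ) : cnt S 0 = 0 := by
  simp [cnt]

open Classical in
lemma key_lower (a b : ℕ) (h1 : 1 < a) (S : Set ℕ)
    (hS : S = {n : ℕ | ∃ x y : ℕ, n = x * a + y * b}) (m : ℕ) :
    m ≤ a * cnt S m := by
  rcases Nat.eq_zero_or_pos m with hm | hm
  · simp [hm]
  have ha : 0 < a := by omega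
  rw [cnt_card]
  set q := (m - 1) / a + 1 with hq
  have hcard : q ≤ ((Finset.range m).filter (· ∈ S)).card := by
    have hmap : ∀ k ∈ Finset.range q, (fun k => k * a) k ∈ (Finset.range m).filter (· ∈ S) := by
      intro k hk
      simp only [Finset.mem_range] at hk
      have hka : k * a < m := by
        have : k ≤ (m - 1) / a := by omega
        have h2 : k * a ≤ ((m - 1) / a) * a := Nat.mul_le_mul_right a this
        have h3 : ((m - 1) / a) * a ≤ m - 1 := Nat.div_mul_le_self _ _
        omega
      simp only [Finset.mem_filter, Finset.mem_range]
      exact ⟨hka, by rw [hS]; exact ⟨k, 0, by ring⟩⟩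
    have := Finset.card_le_card_of_injOn (fun k => k * a) hmap
      (fun x _ y _ h => Nat.eq_of_mul_eq_mul_right ha h)
    simpa using this
  have h4 : a * q ≥ m := by
    have hd := Nat.div_add_mod (m - 1) a
    have hm2 := Nat.mod_lt (m - 1) ha
    have h5 : a * q = a * ((m-1)/a) + a := by rw [hq]; ring
    omega
  calc m ≤ a * q := h4
    _ ≤ a * _ := Nat.mul_le_mul_left a hcard

lemma cnt_a (a b : ℕ) (h1 : 1 < a) (h2 : a < b) (S : Set ℕ)
    (hS : S = {n : ℕ | ∃ x y : ℕ, n = x * a + y * b}) :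
    cnt S a = 1 := by
  have : {n : ℕ | n ∈ S ∧ n < a} = {0} := by
    ext n
    simp only [Set.mem_setOf_eq, Set.mem_singleton_iff, hS]
    constructor
    · rintro ⟨⟨x, y, rfl⟩, hn⟩
      rcases Nat.eq_zero_or_pos x with hx | hx
      · rcases Nat.eq_zero_or_pos y with hy | hy
        · simp [hx, hy]
        · nlinarith
      · nlinarith
    · rintro rfl
      exact ⟨⟨0, 0, by ring⟩, by omega⟩
  rw [cnt, this, Set.ncard_singleton]

/-- first singularity of the Upsilon function of the torus knot T_{a,b}. -/
theorem stmt_6 (a b : ℕ) (hab : Nat.Coprime a b) (h1 : 1 < a) (h2 : a < b)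
    (S : Set ℕ) (hS : S = {n : ℕ | ∃ x y : ℕ, n = x * a + y * b})
    (g : ℕ) (hg : g = (a - 1) * (b - 1) / 2) (t : ℝ) :
    (0 ≤ t → t ≤ 2 / (a : ℝ) → ups S g t = -(g : ℝ) * t) ∧
    (2 / (a : ℝ) < t → t ≤ 1 → ups S g t > -(g : ℝ) * t) := by
  have ha : (0:ℝ) < a := by exact_mod_cast Nat.lt_of_lt_of_le Nat.zero_lt_one h1.le
  have hg2 : 2 * g = (a - 1) * (b - 1) := by
    have heven : Even ((a - 1) * (b - 1)) := by
      rcases Nat.even_or_odd a with he | ho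
      · have : Odd b := by
          rcases Nat.even_or_odd b with hb | hb
          · exfalso
            have h2a : 2 ∣ a := he.two_dvd
            have h2b : 2 ∣ b := hb.two_dvd
            have : (2:ℕ) ∣ 1 := hab ▸ Nat.dvd_gcd h2a h2b
            omega
          · exact hb
        exact (Nat.Odd.sub_odd this odd_one).mul_left _
      · exact (Nat.Odd.sub_odd ho odd_one).mul_right _
    rw [hg, Nat.two_mul_div_two_of_even heven]
  have hale : a ≤ 2 * g := by
    rw [hg2]
    calc a = 1 * a := (one_mul a).symm
      _ ≤ (a - 1) * (b - 1) := Nat.mul_le_mul (by omega) (by omega)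
  constructor
  · intro ht0 ht
    apply le_antisymm
    · apply Finset.sup'_le
      intro m hm
      have hk : (m : ℝ) ≤ (a : ℝ) * (cnt S m : ℝ) := by
        exact_mod_cast key_lower a b h1 S hS m
      have h5 : t * m ≤ 2 * (cnt S m : ℝ) := by
        have h6 : t * m ≤ (2 / a) * m :=
          mul_le_mul_of_nonneg_right ht (Nat.cast_nonneg m)
        have h7 : (2 / (a:ℝ)) * m ≤ 2 * cnt S m := by
          rw [div_mul_eq_mul_div, div_le_iff₀ ha]
          nlinarith
        linarith
      linarith [h5]
    · have h0 : (0:ℕ) ∈ Finset.range (2 * g + 1) := by simp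
      have := Finset.le_sup' (fun m => -2 * (cnt S m : ℝ) - t * ((g : ℝ) - (m : ℝ))) h0
      rw [ups]
      simp only [cnt_zero] at this ⊢
      calc -(g:ℝ) * t = -2 * ((0:ℕ):ℝ) - t * ((g:ℝ) - ((0:ℕ):ℝ)) := by push_cast; ring
        _ ≤ _ := this
  · intro ht ht1
    have hmem : a ∈ Finset.range (2 * g + 1) := by
      simp; omega
    have hle := Finset.le_sup' (fun m => -2 * (cnt S m : ℝ) - t * ((g : ℝ) - (m : ℝ))) hmem
    rw [ups] at *
    have hca : cnt S a = 1 := cnt_a a b h1 h2 S hS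
    have h2t : 2 < t * a := by
      rw [div_lt_iff₀ ha] at ht
      exact ht
    simp only [hca] at hle
    have : -(g:ℝ) * t < -2 * ((1:ℕ):ℝ) - t * ((g:ℝ) - (a:ℝ)) := by
      push_cast
      nlinarith
    linarith
end

section
/- Let S be a submonoid of ℕ with least nonzero element a > 0, let g ∈ ℕ, and suppose for all m ∈ {0,...,2g} that a·#(S ∩ [0,m)) ≥ m. Then for every real t with 0 ≤ t ≤ 2/a and every m ∈ {0,...,2g}, we have −2·#(S ∩ [0,m)) − t·(g − m) ≤ −g·t. -/
/-- the main estimate in the proof that Υ equals -gt on [0, 2/a]. -/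
theorem stmt_7 (S : AddSubmonoid ℕ) (a : ℕ)
    (hleast : IsLeast {n : ℕ | n ∈ S ∧ n ≠ 0} a) (hpos : 0 < a) (g : ℕ)
    (hcount : ∀ m ≤ 2 * g, m ≤ a * cnt (S : Set ℕ) m)
    (t : ℝ) (ht0 : 0 ≤ t) (ht1 : t ≤ 2 / (a : ℝ)) (m : ℕ) (hm : m ≤ 2 * g) :
    -2 * (cnt (S : Set ℕ) m : ℝ) - t * ((g : ℝ) - (m : ℝ)) ≤ -(g : ℝ) * t := by
  have ha : (0 : ℝ) < a := by exact_mod_cast hpos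
  have hc := hcount m hm
  have hc' : (m : ℝ) ≤ a * cnt (S : Set ℕ) m := by exact_mod_cast hc
  have h1 : t * m ≤ 2 * cnt (S : Set ℕ) m := by
    calc t * m ≤ (2 / a) * m := by
          apply mul_le_mul_of_nonneg_right ht1 (by positivity)
      _ ≤ 2 * cnt (S : Set ℕ) m := by
          rw [div_mul_eq_mul_div, div_le_iff₀ ha]
          nlinarith
  nlinarith
end
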